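/- Let H be a complex Hilbert space and let B : H × H → ℂ be a bounded sesquilinear form (linear in the first argument, conjugate-linear in the second, with |B(u,v)| ≤ M‖u‖‖v‖ for some M > 0). Assume B satisfies a Gårding inequality: there exist a compact operator K : H → H and α > 0 such that α‖v‖² ≤ Re B(v,v) + Re⟨K v, v⟩ for all v ∈ H. If B is nondegenerate in its first argument (i.e., B(u,v) = 0 for all v ∈ H implies u = 0), then there exists γ > 0 such that for every u ∈ H, sup over nonzero v ∈ H of |B(u,v)|/‖v‖ is at least γ‖u‖ (the inf-sup condition holds). -/

import Mathlib

/-!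
Riesz representation turns `B` into an operator `T` with `B u v = ⟪v, T u⟫`. The Gårding
inequality says that `T + K` is coercive, hence bounded below, and nondegeneracy says that `T` is
injective. An injective compact perturbation of a bounded-below operator is bounded below: if
`‖w n‖ = 1` and `T (w n) → 0`, pass to a subsequence along which `K (w n)` converges; then
`(T + K) (w n)` converges, hence so does `w n`, and its limit is a unit vector in `ker T`.
Finally, testing with `v = T u` shows that the supremum in the inf-sup condition is at least
`‖T u‖`.
-/

open Filter Topology Function
open scoped InnerProductSpace NNReal

theorem AntilipschitzWith.exists_tendsto_of_tendsto_comp {α β : Type*} [PseudoEMetricSpace α]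
    [PseudoEMetricSpace β] [CompleteSpace α] {K : ℝ≥0} {f : α → β} (hf : AntilipschitzWith K f)
    (hfc : UniformContinuous f) {w : ℕ → α} {y : β} (h : Tendsto (f ∘ w) atTop (𝓝 y)) :
    ∃ x, Tendsto w atTop (𝓝 x) :=
  cauchySeq_tendsto_of_complete <| (hf.isUniformInducing hfc).cauchy_map_iff.mp h.cauchySeq

section RCLike

variable {𝕜 E F : Type*} [RCLike 𝕜] [NormedAddCommGroup E] [NormedSpace 𝕜 E]
  [NormedAddCommGroup F] [NormedSpace 𝕜 F]

theorem ContinuousLinearMap.exists_seq_norm_eq_one_tendsto_zero {T : E →L[𝕜] F}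
    (hT : ¬∃ C, AntilipschitzWith C T) :
    ∃ w : ℕ → E, (∀ n, ‖w n‖ = 1) ∧ Tendsto (T ∘ w) atTop (𝓝 0) := by
  rw [antilipschitzWith_iff_exists_mul_le_norm] at hT
  push Not at hT
  have hx (n : ℕ) : ∃ x : E, ‖T x‖ < 1 / (n + 1) * ‖x‖ := hT _ Nat.one_div_pos_of_nat
  choose x hx using hx
  have hx0 (n : ℕ) : x n ≠ 0 := by
    intro h
    simpa [h] using hx n
  refine ⟨fun n => (‖x n‖⁻¹ : 𝕜) • x n, fun n => norm_smul_inv_norm (hx0 n), ?_⟩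
  refine squeeze_zero_norm (fun n => ?_) tendsto_one_div_add_atTop_nhds_zero_nat
  have hpos : 0 < ‖x n‖ := norm_pos_iff.mpr (hx0 n)
  rw [Function.comp_apply, map_smul, norm_smul, norm_inv, RCLike.norm_ofReal, abs_norm,
    inv_mul_le_iff₀ hpos, mul_comm]
  exact (hx n).le

theorem ContinuousLinearMap.exists_antilipschitzWith_of_antilipschitzWith_add_compact
    [CompleteSpace E] {T K : E →L[𝕜] F} {C : ℝ≥0} (hK : IsCompactOperator K)
    (hTK : AntilipschitzWith C (T + K)) (hT : Injective T) : ∃ C', AntilipschitzWith C' T := by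
  by_contra hnot
  obtain ⟨w, hw, hTw⟩ := exists_seq_norm_eq_one_tendsto_zero hnot
  have hKball :=
    hK.isCompact_closure_image_of_bounded (Metric.isBounded_closedBall (x := 0) (r := 1))
  obtain ⟨y, -, φ, hφ, hKw⟩ := hKball.tendsto_subseq
    fun n => subset_closure (Set.mem_image_of_mem K (x := w n) (by simp [hw]))
  have hTwφ := hTw.comp hφ.tendsto_atTop
  have hTKw : Tendsto ((T + K) ∘ w ∘ φ) atTop (𝓝 y) := by
    simpa [comp_def] using hTwφ.add hKw
  obtain ⟨u, hu⟩ := hTK.exists_tendsto_of_tendsto_comp (T + K).uniformContinuous hTKw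
  have hTu : T u = 0 := tendsto_nhds_unique ((T.continuous.tendsto u).comp hu) hTwφ
  have hu1 : ‖u‖ = 1 := tendsto_nhds_unique hu.norm (by simp [hw])
  simp [(injective_iff_map_eq_zero T).mp hT u hTu] at hu1

end RCLike

section InnerProductSpace

variable {𝕜 E : Type*} [RCLike 𝕜] [NormedAddCommGroup E] [InnerProductSpace 𝕜 E]

theorem mul_norm_le_norm_of_mul_sq_le_re_inner {α : ℝ} {x v : E}
    (h : α * ‖v‖ ^ 2 ≤ RCLike.re ⟪x, v⟫_𝕜) : α * ‖v‖ ≤ ‖x‖ := by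
  rcases eq_or_ne v 0 with rfl | hv
  · simp
  refine le_of_mul_le_mul_right ?_ (norm_pos_iff.mpr hv)
  calc α * ‖v‖ * ‖v‖ = α * ‖v‖ ^ 2 := by ring
    _ ≤ RCLike.re ⟪x, v⟫_𝕜 := h
    _ ≤ ‖⟪x, v⟫_𝕜‖ := RCLike.re_le_norm _
    _ ≤ ‖x‖ * ‖v‖ := norm_inner_le_norm x v

theorem norm_le_sSup_norm_inner_div_norm (x : E) :
    ‖x‖ ≤ sSup {r : ℝ | ∃ v : E, v ≠ 0 ∧ r = ‖⟪v, x⟫_𝕜‖ / ‖v‖} := by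
  rcases eq_or_ne x 0 with rfl | hx
  · rw [norm_zero]
    exact Real.sSup_nonneg fun r ⟨v, _, hr⟩ => hr ▸ by positivity
  refine le_csSup ⟨‖x‖, ?_⟩ ⟨x, hx, ?_⟩
  · rintro r ⟨v, hv, rfl⟩
    rw [div_le_iff₀ (norm_pos_iff.mpr hv), mul_comm]
    exact norm_inner_le_norm v x
  · rw [inner_self_eq_norm_sq_to_K, norm_pow, RCLike.norm_ofReal, abs_norm, sq,
      mul_div_cancel_right₀ _ (norm_ne_zero_iff.mpr hx)]

theorem exists_continuousLinearMap_inner_eq_of_bounded_sesquilinear [CompleteSpace E]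
    (B : E → E → 𝕜)
    (hadd₁ : ∀ u₁ u₂ v : E, B (u₁ + u₂) v = B u₁ v + B u₂ v)
    (hsmul₁ : ∀ (a : 𝕜) (u v : E), B (a • u) v = a * B u v)
    (hadd₂ : ∀ u v₁ v₂ : E, B u (v₁ + v₂) = B u v₁ + B u v₂)
    (hsmul₂ : ∀ (a : 𝕜) (u v : E), B u (a • v) = (starRingEnd 𝕜) a * B u v)
    (M : ℝ) (hbound : ∀ u v : E, ‖B u v‖ ≤ M * ‖u‖ * ‖v‖) :
    ∃ T : E →L[𝕜] E, ∀ u v, ⟪v, T u⟫_𝕜 = B u v := by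
  -- `continuousLinearMapOfBilin` wants a form conjugate-linear in its first slot, so flip `B`
  -- and take the adjoint of the resulting operator.
  let Bflip : E →L⋆[𝕜] E →L[𝕜] 𝕜 :=
    (LinearMap.mk₂'ₛₗ (starRingEnd 𝕜) (RingHom.id 𝕜) (fun v u => B u v)
      (fun _ _ _ => hadd₂ _ _ _) (fun _ _ _ => hsmul₂ _ _ _)
      (fun _ _ _ => hadd₁ _ _ _) (fun _ _ _ => hsmul₁ _ _ _)).mkContinuous₂ M
      fun v u => (hbound u v).trans_eq (by ring)
  refine ⟨ContinuousLinearMap.adjoint (InnerProductSpace.continuousLinearMapOfBilin Bflip),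
    fun u v => ?_⟩
  rw [ContinuousLinearMap.adjoint_inner_right, InnerProductSpace.continuousLinearMapOfBilin_apply]
  rfl

end InnerProductSpace

theorem garding_nondegenerate_infsup_general
    {H : Type*} [NormedAddCommGroup H] [InnerProductSpace ℂ H] [CompleteSpace H]
    (B : H → H → ℂ)
    -- sesquilinear: linear in the first argument, conjugate-linear in the second
    (hadd₁ : ∀ u₁ u₂ v : H, B (u₁ + u₂) v = B u₁ v + B u₂ v)
    (hsmul₁ : ∀ (a : ℂ) (u v : H), B (a • u) v = a * B u v)
    (hadd₂ : ∀ u v₁ v₂ : H, B u (v₁ + v₂) = B u v₁ + B u v₂)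
    (hsmul₂ : ∀ (a : ℂ) (u v : H), B u (a • v) = (starRingEnd ℂ) a * B u v)
    -- boundedness
    (M : ℝ)
    (hbound : ∀ u v : H, ‖B u v‖ ≤ M * ‖u‖ * ‖v‖)
    -- Gårding inequality with a compact operator K
    (K : H →L[ℂ] H) (hK : IsCompactOperator K)
    (α : ℝ) (hα : 0 < α)
    (hgarding : ∀ v : H, α * ‖v‖ ^ 2 ≤ (B v v).re + (inner ℂ (K v) v : ℂ).re)
    -- nondegeneracy in the first argument
    (hnd : ∀ u : H, (∀ v : H, B u v = 0) → u = 0) :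
    ∃ γ > 0, ∀ u : H,
      γ * ‖u‖ ≤ sSup {r : ℝ | ∃ v : H, v ≠ 0 ∧ r = ‖B u v‖ / ‖v‖} := by
  obtain ⟨T, hT⟩ :=
    exists_continuousLinearMap_inner_eq_of_bounded_sesquilinear B hadd₁ hsmul₁ hadd₂ hsmul₂ M hbound
  have hcoercive (v : H) : α * ‖v‖ ^ 2 ≤ RCLike.re ⟪(T + K) v, v⟫_ℂ := by
    rw [add_apply, inner_add_left, map_add, inner_re_symm, hT]
    exact hgarding v
  obtain ⟨C, hTK⟩ : ∃ C, AntilipschitzWith C (T + K) :=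
    antilipschitzWith_iff_exists_mul_le_norm.mpr
      ⟨α, hα, fun v => mul_norm_le_norm_of_mul_sq_le_re_inner (hcoercive v)⟩
  have hTinj : Injective T := (injective_iff_map_eq_zero T).mpr fun u hu =>
    hnd u fun v => by rw [← hT, hu, inner_zero_right]
  obtain ⟨γ, hγ, hTγ⟩ := antilipschitzWith_iff_exists_mul_le_norm.mp
    (T.exists_antilipschitzWith_of_antilipschitzWith_add_compact hK hTK hTinj)
  refine ⟨γ, hγ, fun u => (hTγ u).trans ?_⟩
  simpa only [hT] using norm_le_sSup_norm_inner_div_norm (𝕜 := ℂ) (T u)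

/-- Gårding inequality plus nondegeneracy (uniqueness) implies the inf-sup condition
for a bounded sesquilinear form on a complex Hilbert space. -/
theorem garding_nondegenerate_infsup
    {H : Type*} [NormedAddCommGroup H] [InnerProductSpace ℂ H] [CompleteSpace H]
    (B : H → H → ℂ)
    -- sesquilinear: linear in the first argument, conjugate-linear in the second
    (hadd₁ : ∀ u₁ u₂ v : H, B (u₁ + u₂) v = B u₁ v + B u₂ v)
    (hsmul₁ : ∀ (a : ℂ) (u v : H), B (a • u) v = a * B u v)
    (hadd₂ : ∀ u v₁ v₂ : H, B u (v₁ + v₂) = B u v₁ + B u v₂)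
    (hsmul₂ : ∀ (a : ℂ) (u v : H), B u (a • v) = (starRingEnd ℂ) a * B u v)
    -- boundedness
    (M : ℝ) (hM : 0 < M)
    (hbound : ∀ u v : H, ‖B u v‖ ≤ M * ‖u‖ * ‖v‖)
    -- Gårding inequality with a compact operator K
    (K : H →L[ℂ] H) (hK : IsCompactOperator K)
    (α : ℝ) (hα : 0 < α)
    (hgarding : ∀ v : H, α * ‖v‖ ^ 2 ≤ (B v v).re + (inner ℂ (K v) v : ℂ).re)
    -- nondegeneracy in the first argument
    (hnd : ∀ u : H, (∀ v : H, B u v = 0) → u = 0) :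
    ∃ γ > 0, ∀ u : H,
      γ * ‖u‖ ≤ sSup {r : ℝ | ∃ v : H, v ≠ 0 ∧ r = ‖B u v‖ / ‖v‖} :=
  garding_nondegenerate_infsup_general B hadd₁ hsmul₁ hadd₂ hsmul₂ M hbound K hK α hα hgarding hnd
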